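/- Let E₁, E₂ be real finite-dimensional inner product spaces, 𝒳 ⊆ E₁ a nonempty closed convex set with metric projection P_𝒳, and for γ > 0 define 𝒢_𝒳(x, g, γ) := (x − P_𝒳(x − γg))/γ. Fix 0 < μ_g ≤ L_{g,1}, L_{f,0}, L_{f,1}, L_{g,2} > 0, κ_g := L_{g,1}/μ_g, κ_F := 2L_{f,1}²/μ_g² + 4L_{f,0}²L_{g,2}²/μ_g⁴ + 16L_{f,1}²L_{g,1}²/μ_g⁴ + 16L_{f,0}²L_{g,1}²L_{g,2}²/μ_g⁶. Let f̂ : E₁ × E₂ → ℝ be differentiable with ∇f̂ L_{f,1}-Lipschitz (ℓ² product norm) and ‖∇f̂(x,y)‖ ≤ L_{f,0} everywhere; let ĝ : E₁ × E₂ → ℝ be such that ĝ(x,·) is differentiable and μ_g-strongly convex with unique minimizer y*(x); let Ĥ : E₁ × E₂ → (operators E₂ → E₂) take self-adjoint values with ⟨Ĥ(x,y)v, v⟩ ≥ μ_g‖v‖², ‖Ĥ(x,y)‖ ≤ L_{g,1}, and be L_{g,2}-Lipschitz; and let Ĵ : E₁ × E₂ → (operators E₂ → E₁) satisfy ‖Ĵ(x,y)‖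 ≤ L_{g,1} and be L_{g,2}-Lipschitz. Define v*(x,y) := Ĥ(x,y)⁻¹ ∇_y f̂(x,y), ∇̃f̂(x,y,v) := ∇_x f̂(x,y) − Ĵ(x,y) v, and ∇F̂(x) := ∇̃f̂(x, y*(x), v*(x, y*(x))). Let x ∈ 𝒳, y ∈ E₂, v ∈ E₂, γ > 0, δ ≥ 0, W > 0, and suppose ‖∇̃f̂(x,y,v)‖² + κ_F ‖∇_y ĝ(x,y)‖² + 8κ_g² ‖Ĥ(x,y) v − ∇_y f̂(x,y)‖² ≤ δ²/W². Then ‖𝒢_𝒳(x, ∇F̂(x), γ)‖² ≤ 2δ²/W². -/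

import Mathlib

open scoped RealInnerProductSpace

/-!
For `x ∈ 𝒳` the projection of `x - γg` is no farther from `x` than `x - γg` is, so
`‖𝒢_𝒳(x, g, γ)‖ ≤ ‖g‖`, and it suffices to bound `‖∇F̂(x)‖² ≤ 2‖∇̃f̂(x,y,v)‖² + 2‖e‖²` with
`e = ∇F̂(x) - ∇̃f̂(x,y,v)`. Splitting `e` along `y ↦ y*(x)` and `v ↦ v*(x,y) ↦ v*(x,y*(x))`,
every piece is a Lipschitz variation or the solution error of a linear system with coercive
operator `Ĥ`. Coercivity bounds those errors by the residual `‖Ĥv - ∇_y f̂‖ / μ_g` and by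
`‖y - y*(x)‖ ≤ ‖∇_y ĝ(x,y)‖ / μ_g` (strong convexity), which yields
`‖e‖² ≤ κ_F‖∇_y ĝ(x,y)‖² + 8κ_g²‖Ĥv - ∇_y f̂‖²`.
-/

theorem mul_norm_le_of_mul_sq_norm_le_inner {E : Type*} [NormedAddCommGroup E]
    [InnerProductSpace ℝ E] {μ : ℝ} {u w : E} (h : μ * ‖u‖ ^ 2 ≤ ⟪w, u⟫) :
    μ * ‖u‖ ≤ ‖w‖ := by
  rcases (norm_nonneg u).eq_or_lt with hu | hu
  · simp [← hu]
  · have := h.trans (real_inner_le_norm w u)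
    nlinarith

theorem le_mul_of_sq_le_mul_sq {a L c : ℝ} (hL : 0 ≤ L) (hc : 0 ≤ c)
    (h : a ^ 2 ≤ L ^ 2 * c ^ 2) : a ≤ L * c :=
  (abs_le_of_sq_le_sq' (by rwa [mul_pow]) (mul_nonneg hL hc)).2

section Projection

variable {E : Type*} [NormedAddCommGroup E] [InnerProductSpace ℝ E]

noncomputable def gradientMapping (P : E → E) (x g : E) (γ : ℝ) : E :=
  γ⁻¹ • (x - P (x - γ • g))

theorem Convex.inner_sub_le_zero_of_nearest {X : Set E} (hX : Convex ℝ X) {z p : E}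
    (hp : p ∈ X) (hnear : ∀ u ∈ X, ‖z - p‖ ≤ ‖z - u‖) {u : E} (hu : u ∈ X) :
    ⟪z - p, u - p⟫ ≤ 0 := by
  have : Nonempty X := ⟨⟨p, hp⟩⟩
  refine (norm_eq_iInf_iff_real_inner_le_zero hX hp).1 ?_ u hu
  exact le_antisymm (le_ciInf fun w => hnear w w.2)
    (ciInf_le ⟨0, by rintro _ ⟨w, rfl⟩; exact norm_nonneg _⟩ (⟨p, hp⟩ : X))

theorem Convex.norm_sub_nearest_le {X : Set E} (hX : Convex ℝ X) {z p : E}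
    (hp : p ∈ X) (hnear : ∀ u ∈ X, ‖z - p‖ ≤ ‖z - u‖) {x : E} (hx : x ∈ X) :
    ‖x - p‖ ≤ ‖x - z‖ := by
  have hvar := hX.inner_sub_le_zero_of_nearest hp hnear hx
  have hsplit : ‖x - p‖ ^ 2 = ⟪x - z, x - p⟫ + ⟪z - p, x - p⟫ := by
    rw [← inner_add_left, sub_add_sub_cancel, real_inner_self_eq_norm_sq]
  simpa using mul_norm_le_of_mul_sq_norm_le_inner (μ := 1) (by linarith)

theorem norm_gradientMapping_le {X : Set E} (hX : Convex ℝ X) {P : E → E}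
    (hP : ∀ z, P z ∈ X ∧ ∀ u ∈ X, ‖z - P z‖ ≤ ‖z - u‖) {x : E} (hx : x ∈ X) (g : E) (γ : ℝ) :
    ‖gradientMapping P x g γ‖ ≤ ‖g‖ := by
  have hnear := hX.norm_sub_nearest_le (hP (x - γ • g)).1 (hP (x - γ • g)).2 hx
  rw [sub_sub_cancel] at hnear
  rcases eq_or_ne γ 0 with rfl | hγ
  · simp [gradientMapping]
  · calc ‖gradientMapping P x g γ‖ ≤ ‖γ⁻¹ • γ • g‖ := by
          rw [gradientMapping, norm_smul, norm_smul γ⁻¹]; gcongr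
      _ = ‖g‖ := by rw [inv_smul_smul₀ hγ]

end Projection

section StrongConvexity

theorem ConvexOn.hasFDerivAt_le {E : Type*} [NormedAddCommGroup E] [NormedSpace ℝ E]
    {φ : E → ℝ} (hφ : ConvexOn ℝ Set.univ φ) {a : E} {D : E →L[ℝ] ℝ}
    (hD : HasFDerivAt φ D a) (b : E) : D (b - a) ≤ φ b - φ a := by
  have hline : ConvexOn ℝ Set.univ (fun t : ℝ => φ (a + t • (b - a))) := by
    simpa [Function.comp_def, AffineMap.lineMap_apply, add_comm] using
      hφ.comp_affineMap (AffineMap.lineMap a b : ℝ →ᵃ[ℝ] E)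
  have hderiv : HasDerivAt (fun t : ℝ => φ (a + t • (b - a))) (D (b - a)) 0 := by
    have hD' : HasFDerivAt φ D (a + (0 : ℝ) • (b - a)) := by simpa using hD
    exact hD'.comp_hasDerivAt (0 : ℝ)
      (by simpa using ((hasDerivAt_id (0 : ℝ)).smul_const (b - a)).const_add a)
  simpa [slope_def_field] using
    hline.le_slope_of_hasDerivAt (Set.mem_univ 0) (Set.mem_univ 1) one_pos hderiv

variable {E : Type*} [NormedAddCommGroup E] [InnerProductSpace ℝ E] [CompleteSpace E]
  {μ : ℝ} {g : E → ℝ}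

theorem StrongConvexOn.mul_sq_norm_sub_le_inner_gradient_sub
    (hg : StrongConvexOn Set.univ μ g) {a b ga gb : E} (ha : HasGradientAt g ga a)
    (hb : HasGradientAt g gb b) : μ * ‖a - b‖ ^ 2 ≤ ⟪ga - gb, a - b⟫ := by
  have hconv : ConvexOn ℝ Set.univ (fun z => g z - μ / 2 * ‖z‖ ^ 2) :=
    strongConvexOn_iff_convex.mp hg
  have hderiv {z gz : E} (hz : HasGradientAt g gz z) :
      HasFDerivAt (fun z => g z - μ / 2 * ‖z‖ ^ 2)
        (InnerProductSpace.toDual ℝ E gz - (μ / 2) • (2 • innerSL ℝ z) : E →L[ℝ] ℝ) z :=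
    hz.hasFDerivAt.sub ((hasStrictFDerivAt_norm_sq z).hasFDerivAt.const_mul (μ / 2))
  have hab := hconv.hasFDerivAt_le (hderiv ha) b
  have hba := hconv.hasFDerivAt_le (hderiv hb) a
  simp only [sub_apply, smul_apply, InnerProductSpace.toDual_apply_apply, innerSL_apply_apply,
    smul_eq_mul, nsmul_eq_mul, Nat.cast_ofNat] at hab hba
  have hsq : ‖a - b‖ ^ 2 = ⟪a, a - b⟫ - ⟪b, a - b⟫ := by
    rw [← inner_sub_left, real_inner_self_eq_norm_sq]
  rw [inner_sub_left, hsq]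
  rw [← neg_sub a b, inner_neg_right, inner_neg_right] at hab
  linarith

theorem HasGradientAt.eq_zero_of_forall_le {ys gys : E} (h : HasGradientAt g gys ys)
    (hmin : ∀ z, g ys ≤ g z) : gys = 0 := by
  simpa using IsLocalMin.hasFDerivAt_eq_zero (Filter.Eventually.of_forall hmin) h.hasFDerivAt

theorem StrongConvexOn.mul_norm_sub_le_norm_gradient (hg : StrongConvexOn Set.univ μ g)
    {y ys gy gys : E} (hy : HasGradientAt g gy y) (hys : HasGradientAt g gys ys)
    (hmin : ∀ z, g ys ≤ g z) : μ * ‖y - ys‖ ≤ ‖gy‖ := by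
  obtain rfl : gys = 0 := hys.eq_zero_of_forall_le hmin
  exact mul_norm_le_of_mul_sq_norm_le_inner (by
    simpa using hg.mul_sq_norm_sub_le_inner_gradient_sub hy hys)

end StrongConvexity

section Operators

variable {E F : Type*} [NormedAddCommGroup E] [NormedSpace ℝ E]
  [NormedAddCommGroup F] [NormedSpace ℝ F]

theorem norm_sub_apply_sub_sub_apply_le (a a' : F) (J J' : E →L[ℝ] F) (v w w' : E) :
    ‖(a' - J' w') - (a - J v)‖ ≤
      ‖a' - a‖ + ‖J'‖ * ‖w' - w‖ + ‖J' - J‖ * ‖w‖ + ‖J‖ * ‖w - v‖ := by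
  have hsplit : (a' - J' w') - (a - J v) =
      (a' - a) - J' (w' - w) - (J' - J) w - J (w - v) := by
    simp only [map_sub, sub_apply]
    abel
  rw [hsplit]
  grw [norm_sub_le, norm_sub_le, norm_sub_le, J'.le_opNorm, (J' - J).le_opNorm, J.le_opNorm]

theorem mul_norm_sub_le_of_apply_eq {μ : ℝ} {H H' : E →L[ℝ] E} {b b' w w' : E}
    (hcoer : ∀ u, μ * ‖u‖ ≤ ‖H' u‖) (hw : H w = b) (hw' : H' w' = b') :
    μ * ‖w' - w‖ ≤ ‖b' - b‖ + ‖H - H'‖ * ‖w‖ := by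
  have hres : H' (w' - w) = (b' - b) + (H - H') w := by
    rw [map_sub, sub_apply, hw', ← hw]
    abel
  calc μ * ‖w' - w‖ ≤ ‖H' (w' - w)‖ := hcoer _
    _ ≤ ‖b' - b‖ + ‖H - H'‖ * ‖w‖ := by grw [hres, norm_add_le, (H - H').le_opNorm]

theorem sq_mul_norm_hypergradient_sub_le {E₁ E₂ : Type*} [NormedAddCommGroup E₁]
    [NormedSpace ℝ E₁] [NormedAddCommGroup E₂] [NormedSpace ℝ E₂]
    {μ L₁ Lf₀ Lf₁ Lg₂ d : ℝ} (hμ : 0 < μ)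
    {a a' : E₁} {b b' v w w' : E₂} {H H' : E₂ →L[ℝ] E₂} {J J' : E₂ →L[ℝ] E₁}
    (ha : ‖a' - a‖ ≤ Lf₁ * d) (hb : ‖b' - b‖ ≤ Lf₁ * d) (hb₀ : ‖b‖ ≤ Lf₀)
    (hH : ‖H - H'‖ ≤ Lg₂ * d) (hJ : ‖J' - J‖ ≤ Lg₂ * d) (hJbd : ‖J‖ ≤ L₁) (hJ'bd : ‖J'‖ ≤ L₁)
    (hcoer : ∀ u, μ * ‖u‖ ≤ ‖H u‖) (hcoer' : ∀ u, μ * ‖u‖ ≤ ‖H' u‖)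
    (hw : H w = b) (hw' : H' w' = b') :
    μ ^ 2 * ‖(a' - J' w') - (a - J v)‖ ≤
      (μ + L₁) * (μ * Lf₁ + Lf₀ * Lg₂) * d + μ * L₁ * ‖H v - b‖ := by
  have hL₁ : 0 ≤ L₁ := (norm_nonneg _).trans hJbd
  have hLg₂d : 0 ≤ Lg₂ * d := (norm_nonneg _).trans hJ
  have hμ₀ := hμ.le
  have hw₀ : μ * ‖w‖ ≤ Lf₀ := (hcoer w).trans (hw ▸ hb₀)
  have hwv : μ * ‖w - v‖ ≤ ‖H v - b‖ := by
    simpa [map_sub, hw, norm_sub_rev] using hcoer (w - v)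
  have hww' : μ * ‖w' - w‖ ≤ Lf₁ * d + Lg₂ * d * ‖w‖ := by
    grw [mul_norm_sub_le_of_apply_eq hcoer' hw hw', hb, hH]
  have hN : ‖(a' - J' w') - (a - J v)‖ ≤
      Lf₁ * d + L₁ * ‖w' - w‖ + Lg₂ * d * ‖w‖ + L₁ * ‖w - v‖ := by
    grw [norm_sub_apply_sub_sub_apply_le a a' J J' v w w', ha, hJ, hJbd, hJ'bd]
  calc μ ^ 2 * ‖(a' - J' w') - (a - J v)‖
      ≤ μ ^ 2 * (Lf₁ * d + L₁ * ‖w' - w‖ + Lg₂ * d * ‖w‖ + L₁ * ‖w - v‖) := by gcongr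
    _ = μ ^ 2 * Lf₁ * d + μ * L₁ * (μ * ‖w' - w‖) + μ * (Lg₂ * d) * (μ * ‖w‖)
        + μ * L₁ * (μ * ‖w - v‖) := by ring
    _ ≤ μ ^ 2 * Lf₁ * d + μ * L₁ * (Lf₁ * d + Lg₂ * d * ‖w‖) + μ * (Lg₂ * d) * Lf₀
        + μ * L₁ * ‖H v - b‖ := by grw [hww', hw₀, hwv]
    _ = μ ^ 2 * Lf₁ * d + μ * L₁ * Lf₁ * d + L₁ * (Lg₂ * d) * (μ * ‖w‖)
        + μ * (Lg₂ * d) * Lf₀ + μ * L₁ * ‖H v - b‖ := by ring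
    _ ≤ μ ^ 2 * Lf₁ * d + μ * L₁ * Lf₁ * d + L₁ * (Lg₂ * d) * Lf₀
        + μ * (Lg₂ * d) * Lf₀ + μ * L₁ * ‖H v - b‖ := by grw [hw₀]
    _ = (μ + L₁) * (μ * Lf₁ + Lf₀ * Lg₂) * d + μ * L₁ * ‖H v - b‖ := by ring

end Operators

theorem sq_le_of_sq_mul_le {μ L₁ Lf₀ Lf₁ Lg₂ N d G e : ℝ} (hμ : 0 < μ) (hμL : μ ≤ L₁)
    (hLf₀ : 0 ≤ Lf₀) (hLf₁ : 0 ≤ Lf₁) (hLg₂ : 0 ≤ Lg₂) (hN : 0 ≤ N) (hd : 0 ≤ d)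
    (hdG : μ * d ≤ G) (h : μ ^ 2 * N ≤ (μ + L₁) * (μ * Lf₁ + Lf₀ * Lg₂) * d + μ * L₁ * e) :
    N ^ 2 ≤ (2 * Lf₁ ^ 2 / μ ^ 2 + 4 * Lf₀ ^ 2 * Lg₂ ^ 2 / μ ^ 4 +
      16 * Lf₁ ^ 2 * L₁ ^ 2 / μ ^ 4 + 16 * Lf₀ ^ 2 * L₁ ^ 2 * Lg₂ ^ 2 / μ ^ 6) * G ^ 2 +
      8 * (L₁ / μ) ^ 2 * e ^ 2 := by
  set κ := L₁ / μ with hκ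
  set A := Lf₁ / μ + Lf₀ * Lg₂ / μ ^ 2 with hA
  have hκ₁ : 1 ≤ κ := (one_le_div hμ).2 hμL
  have hA₀ : 0 ≤ A := by positivity
  have hN₁ : N ≤ (1 + κ) * A * (μ * d) + κ * e := by
    have hexp : (1 + κ) * A * (μ * d) + κ * e =
        ((μ + L₁) * (μ * Lf₁ + Lf₀ * Lg₂) * d + μ * L₁ * e) / μ ^ 2 := by
      rw [hκ, hA]; field_simp
    rw [hexp, le_div_iff₀ (by positivity)]
    linarith
  have hN₂ : N ≤ 2 * κ * A * G + κ * e := by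
    grw [hN₁, ← hdG, (by linarith : 1 + κ ≤ 2 * κ)]
  have hA₂ : A ^ 2 ≤ 2 * ((Lf₁ / μ) ^ 2 + (Lf₀ * Lg₂ / μ ^ 2) ^ 2) := add_sq_le
  -- only the last two terms of `κ_F` are needed; the first two are slack
  calc N ^ 2 ≤ (2 * κ * A * G + κ * e) ^ 2 := pow_le_pow_left₀ hN hN₂ 2
    _ ≤ 2 * ((2 * κ * A * G) ^ 2 + (κ * e) ^ 2) := add_sq_le
    _ = 8 * κ ^ 2 * A ^ 2 * G ^ 2 + 2 * κ ^ 2 * e ^ 2 := by ring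
    _ ≤ 8 * κ ^ 2 * (2 * ((Lf₁ / μ) ^ 2 + (Lf₀ * Lg₂ / μ ^ 2) ^ 2)) * G ^ 2
          + 2 * κ ^ 2 * e ^ 2
          + ((2 * Lf₁ ^ 2 / μ ^ 2 + 4 * Lf₀ ^ 2 * Lg₂ ^ 2 / μ ^ 4) * G ^ 2
          + 6 * κ ^ 2 * e ^ 2) := by grw [hA₂]; exact le_add_of_nonneg_right (by positivity)
    _ = _ := by rw [hκ]; ring

theorem stopping_condition_gradient_mapping_general {E₁ E₂ : Type*}
    [NormedAddCommGroup E₁] [InnerProductSpace ℝ E₁]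
    [NormedAddCommGroup E₂] [InnerProductSpace ℝ E₂] [FiniteDimensional ℝ E₂]
    (X : Set E₁) (hXconv : Convex ℝ X)
    (projX : E₁ → E₁)
    (hproj : ∀ z : E₁, projX z ∈ X ∧ ∀ u ∈ X, ‖z - projX z‖ ≤ ‖z - u‖)
    (μ_g L_g1 L_f0 L_f1 L_g2 : ℝ)
    (hμ : 0 < μ_g) (hμL : μ_g ≤ L_g1) (hLf0 : 0 < L_f0) (hLf1 : 0 < L_f1) (hLg2 : 0 < L_g2)
    (κ_g κ_F : ℝ) (hκg : κ_g = L_g1 / μ_g)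
    (hκF : κ_F = 2 * L_f1 ^ 2 / μ_g ^ 2 + 4 * L_f0 ^ 2 * L_g2 ^ 2 / μ_g ^ 4 +
      16 * L_f1 ^ 2 * L_g1 ^ 2 / μ_g ^ 4 + 16 * L_f0 ^ 2 * L_g1 ^ 2 * L_g2 ^ 2 / μ_g ^ 6)
    (fhatx : E₁ → E₂ → E₁) (fhaty : E₁ → E₂ → E₂)
    (hfbd : ∀ (x : E₁) (y : E₂), ‖fhatx x y‖ ^ 2 + ‖fhaty x y‖ ^ 2 ≤ L_f0 ^ 2)
    (hflip : ∀ (x x' : E₁) (y y' : E₂),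
      ‖fhatx x y - fhatx x' y'‖ ^ 2 + ‖fhaty x y - fhaty x' y'‖ ^ 2 ≤
        L_f1 ^ 2 * (‖x - x'‖ ^ 2 + ‖y - y'‖ ^ 2))
    (ghat : E₁ → E₂ → ℝ) (ghaty : E₁ → E₂ → E₂) (ystar : E₁ → E₂)
    (hggrad : ∀ (x : E₁) (y : E₂), HasGradientAt (ghat x) (ghaty x y) y)
    (hgsc : ∀ x : E₁, StrongConvexOn Set.univ μ_g (ghat x))
    (hymin : ∀ (x : E₁) (y : E₂), ghat x (ystar x) ≤ ghat x y)
    (Hhat : E₁ → E₂ → (E₂ →L[ℝ] E₂)) (Jhat : E₁ → E₂ → (E₂ →L[ℝ] E₁))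
    (hHcoer : ∀ (x : E₁) (y : E₂) (v : E₂), μ_g * ‖v‖ ^ 2 ≤ ⟪Hhat x y v, v⟫)
    (hHlip : ∀ (x x' : E₁) (y y' : E₂),
      ‖Hhat x y - Hhat x' y'‖ ^ 2 ≤ L_g2 ^ 2 * (‖x - x'‖ ^ 2 + ‖y - y'‖ ^ 2))
    (hJbd : ∀ (x : E₁) (y : E₂), ‖Jhat x y‖ ≤ L_g1)
    (hJlip : ∀ (x x' : E₁) (y y' : E₂),
      ‖Jhat x y - Jhat x' y'‖ ^ 2 ≤ L_g2 ^ 2 * (‖x - x'‖ ^ 2 + ‖y - y'‖ ^ 2))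
    (vstar : E₁ → E₂ → E₂)
    (hvstar : ∀ (x : E₁) (y : E₂), Hhat x y (vstar x y) = fhaty x y)
    (x : E₁) (hx : x ∈ X) (y v : E₂)
    (γ δ W : ℝ)
    (hstop : ‖fhatx x y - Jhat x y v‖ ^ 2 + κ_F * ‖ghaty x y‖ ^ 2 +
      8 * κ_g ^ 2 * ‖Hhat x y v - fhaty x y‖ ^ 2 ≤ δ ^ 2 / W ^ 2) :
    ‖γ⁻¹ • (x - projX (x - γ •
        (fhatx x (ystar x) - Jhat x (ystar x) (vstar x (ystar x)))))‖ ^ 2 ≤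
      2 * δ ^ 2 / W ^ 2 := by
  subst hκg hκF
  set ys := ystar x
  set T := fhatx x y - Jhat x y v
  set GF := fhatx x ys - Jhat x ys (vstar x ys)
  have hf := hflip x x ys y
  have hH := hHlip x x y ys
  have hJ := hJlip x x ys y
  simp only [sub_self, norm_zero, ne_eq, OfNat.ofNat_ne_zero, not_false_eq_true, zero_pow,
    zero_add, norm_sub_rev ys y] at hf hH hJ
  have hcoer (z u : E₂) : μ_g * ‖u‖ ≤ ‖Hhat x z u‖ :=
    mul_norm_le_of_mul_sq_norm_le_inner (hHcoer x z u)
  have herr := sq_mul_norm_hypergradient_sub_le hμ (v := v)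
    (le_mul_of_sq_le_mul_sq hLf1.le (norm_nonneg _)
      (by linarith [sq_nonneg ‖fhaty x ys - fhaty x y‖]))
    (le_mul_of_sq_le_mul_sq hLf1.le (norm_nonneg _)
      (by linarith [sq_nonneg ‖fhatx x ys - fhatx x y‖]))
    (abs_le_of_sq_le_sq' (by linarith [hfbd x y, sq_nonneg ‖fhatx x y‖]) hLf0.le).2
    (le_mul_of_sq_le_mul_sq hLg2.le (norm_nonneg _) hH)
    (le_mul_of_sq_le_mul_sq hLg2.le (norm_nonneg _) hJ)
    (hJbd x y) (hJbd x ys) (hcoer y) (hcoer ys) (hvstar x y) (hvstar x ys)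
  have hsq := sq_le_of_sq_mul_le hμ hμL hLf0.le hLf1.le hLg2.le (norm_nonneg _) (norm_nonneg _)
    ((hgsc x).mul_norm_sub_le_norm_gradient (hggrad x y) (hggrad x ys) (hymin x)) herr
  calc ‖gradientMapping projX x GF γ‖ ^ 2 ≤ ‖GF‖ ^ 2 := by
        grw [norm_gradientMapping_le hXconv hproj hx]
    _ ≤ (‖T‖ + ‖GF - T‖) ^ 2 := by grw [← norm_le_norm_add_norm_sub']
    _ ≤ 2 * (‖T‖ ^ 2 + ‖GF - T‖ ^ 2) := add_sq_le
    _ ≤ 2 * (δ ^ 2 / W ^ 2) := by linarith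
    _ = 2 * δ ^ 2 / W ^ 2 := by ring

/-- Per-round guarantee of the window-averaged stopping criterion (inequality (C.4_5)):
if at a feasible point `x ∈ 𝒳` the computable stopping condition
`‖∇̃f̂(x,y,v)‖² + κ_F‖∇_y ĝ(x,y)‖² + 8κ_g²‖Ĥ(x,y)v − ∇_y f̂(x,y)‖² ≤ δ²/W²`
holds, then the gradient mapping of the true window hypergradient satisfies
`‖𝒢_𝒳(x, ∇F̂(x), γ)‖² ≤ 2δ²/W²`. -/
theorem stopping_condition_gradient_mapping {E₁ E₂ : Type*}
    [NormedAddCommGroup E₁] [InnerProductSpace ℝ E₁] [FiniteDimensional ℝ E₁]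
    [NormedAddCommGroup E₂] [InnerProductSpace ℝ E₂] [FiniteDimensional ℝ E₂]
    (X : Set E₁) (hXne : X.Nonempty) (hXcl : IsClosed X) (hXconv : Convex ℝ X)
    (projX : E₁ → E₁)
    (hproj : ∀ z : E₁, projX z ∈ X ∧ ∀ u ∈ X, ‖z - projX z‖ ≤ ‖z - u‖)
    (μ_g L_g1 L_f0 L_f1 L_g2 : ℝ)
    (hμ : 0 < μ_g) (hμL : μ_g ≤ L_g1) (hLf0 : 0 < L_f0) (hLf1 : 0 < L_f1) (hLg2 : 0 < L_g2)
    (κ_g κ_F : ℝ) (hκg : κ_g = L_g1 / μ_g)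
    (hκF : κ_F = 2 * L_f1 ^ 2 / μ_g ^ 2 + 4 * L_f0 ^ 2 * L_g2 ^ 2 / μ_g ^ 4 +
      16 * L_f1 ^ 2 * L_g1 ^ 2 / μ_g ^ 4 + 16 * L_f0 ^ 2 * L_g1 ^ 2 * L_g2 ^ 2 / μ_g ^ 6)
    (fhat : E₁ → E₂ → ℝ) (fhatx : E₁ → E₂ → E₁) (fhaty : E₁ → E₂ → E₂)
    (hfx : ∀ (x : E₁) (y : E₂), HasGradientAt (fun x' => fhat x' y) (fhatx x y) x)
    (hfy : ∀ (x : E₁) (y : E₂), HasGradientAt (fun y' => fhat x y') (fhaty x y) y)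
    (hfbd : ∀ (x : E₁) (y : E₂), ‖fhatx x y‖ ^ 2 + ‖fhaty x y‖ ^ 2 ≤ L_f0 ^ 2)
    (hflip : ∀ (x x' : E₁) (y y' : E₂),
      ‖fhatx x y - fhatx x' y'‖ ^ 2 + ‖fhaty x y - fhaty x' y'‖ ^ 2 ≤
        L_f1 ^ 2 * (‖x - x'‖ ^ 2 + ‖y - y'‖ ^ 2))
    (ghat : E₁ → E₂ → ℝ) (ghaty : E₁ → E₂ → E₂) (ystar : E₁ → E₂)
    (hggrad : ∀ (x : E₁) (y : E₂), HasGradientAt (ghat x) (ghaty x y) y)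
    (hgsc : ∀ x : E₁, StrongConvexOn Set.univ μ_g (ghat x))
    (hymin : ∀ (x : E₁) (y : E₂), ghat x (ystar x) ≤ ghat x y)
    (Hhat : E₁ → E₂ → (E₂ →L[ℝ] E₂)) (Jhat : E₁ → E₂ → (E₂ →L[ℝ] E₁))
    (hHsa : ∀ (x : E₁) (y : E₂) (v u : E₂), ⟪Hhat x y v, u⟫ = ⟪v, Hhat x y u⟫)
    (hHcoer : ∀ (x : E₁) (y : E₂) (v : E₂), μ_g * ‖v‖ ^ 2 ≤ ⟪Hhat x y v, v⟫)
    (hHbd : ∀ (x : E₁) (y : E₂), ‖Hhat x y‖ ≤ L_g1)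
    (hHlip : ∀ (x x' : E₁) (y y' : E₂),
      ‖Hhat x y - Hhat x' y'‖ ^ 2 ≤ L_g2 ^ 2 * (‖x - x'‖ ^ 2 + ‖y - y'‖ ^ 2))
    (hJbd : ∀ (x : E₁) (y : E₂), ‖Jhat x y‖ ≤ L_g1)
    (hJlip : ∀ (x x' : E₁) (y y' : E₂),
      ‖Jhat x y - Jhat x' y'‖ ^ 2 ≤ L_g2 ^ 2 * (‖x - x'‖ ^ 2 + ‖y - y'‖ ^ 2))
    (vstar : E₁ → E₂ → E₂)
    (hvstar : ∀ (x : E₁) (y : E₂), Hhat x y (vstar x y) = fhaty x y)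
    (x : E₁) (hx : x ∈ X) (y v : E₂)
    (γ δ W : ℝ) (hγ : 0 < γ) (hδ : 0 ≤ δ) (hWpos : 0 < W)
    (hstop : ‖fhatx x y - Jhat x y v‖ ^ 2 + κ_F * ‖ghaty x y‖ ^ 2 +
      8 * κ_g ^ 2 * ‖Hhat x y v - fhaty x y‖ ^ 2 ≤ δ ^ 2 / W ^ 2) :
    ‖γ⁻¹ • (x - projX (x - γ •
        (fhatx x (ystar x) - Jhat x (ystar x) (vstar x (ystar x)))))‖ ^ 2 ≤
      2 * δ ^ 2 / W ^ 2 :=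
  stopping_condition_gradient_mapping_general X hXconv projX hproj μ_g L_g1 L_f0 L_f1 L_g2 hμ hμL
    hLf0 hLf1 hLg2 κ_g κ_F hκg hκF fhatx fhaty hfbd hflip ghat ghaty ystar hggrad hgsc hymin Hhat
    Jhat hHcoer hHlip hJbd hJlip vstar hvstar x hx y v γ δ W hstop
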